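/- arXiv:2304.09401 — 3 statements merged into one kernel-verified Lean document; each statement's English description precedes it below -/
import Mathlib

section
/- Let ρ be a density matrix written in block form with respect to a projection Π as ρ = [[A, B],[B†, D]], where A = ΠρΠ, D = (I−Π)ρ(I−Π), B = Πρ(I−Π). Let W = Tr[D] and λ = ‖(√A)^g B (√D)^g‖_∞, where (·)^g denotes the Moore–Penrose generalized inverse. Then the trace norm of the off-diagonal block satisfies ‖B‖₁ ≤ λ√W. -/
open Matrix ComplexOrder

noncomputable def Matrix.PosSemidef.sqrt {n 𝕜 : Type*} [Fintype n] [DecidableEq n] [RCLike 𝕜]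
    {A : Matrix n n 𝕜} (hA : A.PosSemidef) : Matrix n n 𝕜 :=
  (hA.1.eigenvectorUnitary : Matrix n n 𝕜) *
    diagonal (fun i => ((Real.sqrt (hA.1.eigenvalues i) : ℝ) : 𝕜)) *
    (star hA.1.eigenvectorUnitary : Matrix n n 𝕜)

/-- The trace norm `‖A‖₁ = Tr √(AᴴA)` of a complex matrix. -/
noncomputable def traceNorm {d : ℕ} (A : Matrix (Fin d) (Fin d) ℂ) : ℝ :=
  ((Matrix.posSemidef_conjTranspose_mul_self A).sqrt).trace.re

/-- The operator (spectral) norm `‖A‖_∞` of a complex matrix. -/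
noncomputable def opNorm {d : ℕ} (A : Matrix (Fin d) (Fin d) ℂ) : ℝ :=
  ‖Matrix.toEuclideanCLM (𝕜 := ℂ) A‖

/-!
Writing `ρ = √ρ √ρ`, the blocks factor as `A = X Xᴴ`, `B = X Zᴴ`, `D = Z Zᴴ` with
`X = P √ρ` and `Z = (1 - P) √ρ`. So the range of `B` lies in that of `√A` and the range of
`Bᴴ` in that of `√D`, and the Penrose identities give `B = √A M √D` for
`M = (√A)^g B (√D)^g`. The Hölder inequality `‖X Y‖₁ ≤ ‖X‖₂ ‖Y‖₂` (polar decomposition of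
`X Y` and Cauchy–Schwarz for the Frobenius inner product) together with
`‖X M‖₂ ≤ ‖X‖₂ ‖M‖_∞` yields `‖B‖₁ ≤ ‖√A‖₂ λ ‖√D‖₂ = λ √(Tr A) √(Tr D) ≤ λ √W`,
because `Tr A ≤ Tr ρ = 1`.
-/

namespace Matrix

section Sqrt

variable {n 𝕜 : Type*} [Fintype n] [DecidableEq n] [RCLike 𝕜] {A : Matrix n n 𝕜}

lemma PosSemidef.posSemidef_sqrt (hA : A.PosSemidef) : hA.sqrt.PosSemidef :=
  (PosSemidef.diagonal fun _ => RCLike.ofReal_nonneg.mpr (Real.sqrt_nonneg _))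
    |>.mul_mul_conjTranspose_same (hA.1.eigenvectorUnitary : Matrix n n 𝕜)

lemma PosSemidef.sqrt_mul_self (hA : A.PosSemidef) : hA.sqrt * hA.sqrt = A := by
  conv_rhs => rw [hA.1.spectral_theorem, Unitary.conjStarAlgAut_apply]
  simp only [sqrt, Matrix.mul_assoc]
  rw [← Matrix.mul_assoc (star _), Unitary.coe_star_mul_self, Matrix.one_mul,
    ← Matrix.mul_assoc (diagonal _), diagonal_mul_diagonal]
  congr 3
  funext i
  simp only [Function.comp_apply, ← RCLike.ofReal_mul,
    Real.mul_self_sqrt (hA.eigenvalues_nonneg i)]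

lemma PosSemidef.mul_mul_conjTranspose_eq_sqrt (hA : A.PosSemidef) {m : Type*}
    (Q R : Matrix m n 𝕜) : Q * A * Rᴴ = Q * hA.sqrt * (R * hA.sqrt)ᴴ := by
  rw [conjTranspose_mul, hA.posSemidef_sqrt.1.eq, Matrix.mul_assoc Q hA.sqrt,
    ← Matrix.mul_assoc hA.sqrt hA.sqrt, hA.sqrt_mul_self, Matrix.mul_assoc]

end Sqrt

section Penrose

variable {m n R : Type*} [Fintype m] [Fintype n] [PartialOrder R] [Ring R] [StarRing R]
  [StarOrderedRing R] [NoZeroDivisors R]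

lemma mul_eq_self_of_mul_mul_conjTranspose_eq {Q : Matrix m m R} {X : Matrix m n R}
    (hQ : Qᴴ = Q) (h : Q * (X * Xᴴ) = X * Xᴴ) : Q * X = X := by
  have h' : X * Xᴴ * Q = X * Xᴴ := by
    simpa only [conjTranspose_mul, conjTranspose_conjTranspose, hQ, Matrix.mul_assoc]
      using congrArg conjTranspose h
  rw [← sub_eq_zero, ← self_mul_conjTranspose_eq_zero]
  calc (Q * X - X) * (Q * X - X)ᴴ
      = Q * (X * Xᴴ) * Q - Q * (X * Xᴴ) - (X * Xᴴ * Q - X * Xᴴ) := by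
        simp only [conjTranspose_sub, conjTranspose_mul, hQ, Matrix.sub_mul, Matrix.mul_sub,
          Matrix.mul_assoc]
        abel
    _ = 0 := by rw [h, h', sub_self]

lemma sqrt_mul_pinv_mul_eq_self {S G : Matrix m m R} {X : Matrix m n R}
    (hS : S * S = X * Xᴴ) (hG₁ : S * G * S = S) (hG₃ : (S * G)ᴴ = S * G) :
    S * G * X = X :=
  mul_eq_self_of_mul_mul_conjTranspose_eq hG₃ (by rw [← hS, ← Matrix.mul_assoc, hG₁])

lemma conjTranspose_mul_pinv_mul_sqrt_eq_self {S G : Matrix m m R} {X : Matrix m n R}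
    (hS : S * S = X * Xᴴ) (hG₁ : S * G * S = S) (hG₄ : (G * S)ᴴ = G * S) :
    Xᴴ * G * S = Xᴴ := by
  have hXX : X * Xᴴ * (G * S) = X * Xᴴ := by
    rw [← hS, Matrix.mul_assoc, ← Matrix.mul_assoc S G S, hG₁]
  have hGS : G * S * (X * Xᴴ) = X * Xᴴ := by
    simpa only [conjTranspose_mul, hG₄, conjTranspose_conjTranspose]
      using congrArg conjTranspose hXX
  have := congrArg conjTranspose (mul_eq_self_of_mul_mul_conjTranspose_eq hG₄ hGS)
  rwa [conjTranspose_mul, hG₄, ← Matrix.mul_assoc] at this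

end Penrose

lemma trace_mul_mul_add_trace_one_sub_mul_mul {n R : Type*} [Fintype n] [DecidableEq n]
    [CommRing R] {P : Matrix n n R} (hP : P * P = P) (ρ : Matrix n n R) :
    (P * ρ * P).trace + ((1 - P) * ρ * (1 - P)).trace = ρ.trace := by
  have hQ : (1 - P) * (1 - P) = 1 - P := by
    rw [Matrix.sub_mul, Matrix.mul_sub, Matrix.mul_sub, hP]; simp
  rw [trace_mul_cycle, hP, trace_mul_cycle, hQ, ← trace_add, ← Matrix.add_mul, add_sub_cancel,
    Matrix.one_mul]

section Frobenius

variable {m n : Type*} [Fintype m] [Fintype n]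

noncomputable def frobeniusNorm (X : Matrix m n ℂ) : ℝ := √(Xᴴ * X).trace.re

lemma frobeniusNorm_nonneg (X : Matrix m n ℂ) : 0 ≤ frobeniusNorm X := Real.sqrt_nonneg _

lemma frobeniusNorm_conjTranspose (X : Matrix m n ℂ) : frobeniusNorm Xᴴ = frobeniusNorm X := by
  rw [frobeniusNorm, frobeniusNorm, conjTranspose_conjTranspose, trace_mul_comm]

lemma PosSemidef.frobeniusNorm_sqrt [DecidableEq n] {A : Matrix n n ℂ} (hA : A.PosSemidef) :
    frobeniusNorm hA.sqrt = √A.trace.re := by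
  rw [frobeniusNorm, hA.posSemidef_sqrt.1.eq, hA.sqrt_mul_self]

lemma re_trace_conjTranspose_mul_le (G K : Matrix m n ℂ) :
    (Gᴴ * K).trace.re ≤ frobeniusNorm G * frobeniusNorm K := by
  have hinner (X Y : Matrix m n ℂ) :
      (Xᴴ * Y).trace = inner ℂ (WithLp.toLp 2 X.vec) (WithLp.toLp 2 Y.vec) := by
    rw [EuclideanSpace.inner_toLp_toLp, dotProduct_comm, ← star_vec_dotProduct_vec]
  have := re_inner_le_norm (𝕜 := ℂ) (WithLp.toLp 2 G.vec) (WithLp.toLp 2 K.vec)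
  rw [norm_eq_sqrt_re_inner (𝕜 := ℂ), norm_eq_sqrt_re_inner (𝕜 := ℂ)] at this
  rwa [frobeniusNorm, frobeniusNorm, hinner, hinner, hinner]

open scoped Norms.L2Operator MatrixOrder in
lemma frobeniusNorm_mul_le [DecidableEq n] (X : Matrix m n ℂ) (M : Matrix n n ℂ) :
    frobeniusNorm (X * M) ≤ frobeniusNorm X * ‖M‖ := by
  have hM : (‖M‖ ^ 2 • 1 - M * Mᴴ).PosSemidef := by
    have := CStarAlgebra.mul_star_le_algebraMap_norm_sq (a := M)
    rwa [Algebra.algebraMap_eq_smul_one, le_iff] at this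
  have htr := (hM.mul_mul_conjTranspose_same X).trace_nonneg
  have hexpand :
      X * (‖M‖ ^ 2 • 1 - M * Mᴴ) * Xᴴ = ‖M‖ ^ 2 • (X * Xᴴ) - (X * M) * (X * M)ᴴ := by
    rw [Matrix.mul_sub, Matrix.sub_mul, Matrix.mul_smul, Matrix.smul_mul, Matrix.mul_one,
      conjTranspose_mul]
    simp only [Matrix.mul_assoc]
  rw [hexpand, trace_sub, trace_smul, trace_mul_comm X, trace_mul_comm (X * M)] at htr
  have hre := (Complex.nonneg_iff.mp htr).1
  rw [Complex.sub_re, Complex.real_smul, Complex.re_ofReal_mul] at hre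
  rw [frobeniusNorm, frobeniusNorm, ← Real.sqrt_sq (norm_nonneg M),
    ← Real.sqrt_mul' _ (sq_nonneg _)]
  gcongr
  linarith

end Frobenius

end Matrix

open scoped Matrix.Norms.L2Operator in
lemma opNorm_eq_norm {d : ℕ} (M : Matrix (Fin d) (Fin d) ℂ) : opNorm M = ‖M‖ := rfl

open scoped Matrix.Norms.L2Operator in
lemma exists_norm_le_one_traceNorm_eq_re_trace {d : ℕ} (B : Matrix (Fin d) (Fin d) ℂ) :
    ∃ W : Matrix (Fin d) (Fin d) ℂ, ‖W‖ ≤ 1 ∧ traceNorm B = (Wᴴ * B).trace.re := by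
  set hH := (posSemidef_conjTranspose_mul_self B).1
  set U := hH.eigenvectorUnitary
  set σ : Fin d → ℝ := fun i => √(hH.eigenvalues i)
  have hdiag (f g : Fin d → ℝ) : diagonal (fun i => (f i : ℂ)) * diagonal (fun i => (g i : ℂ)) =
      diagonal (fun i => ((f i * g i : ℝ) : ℂ)) := by
    simp [diagonal_mul_diagonal]
  have hspec : star (U : Matrix (Fin d) (Fin d) ℂ) * (Bᴴ * B) * U =
      diagonal (fun i => ((σ i * σ i : ℝ) : ℂ)) := by
    have := hH.conjStarAlgAut_star_eigenvectorUnitary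
    rw [Unitary.conjStarAlgAut_apply, Unitary.coe_star, star_star] at this
    rw [this]
    congr 1; funext i
    simp [σ, Real.mul_self_sqrt ((posSemidef_conjTranspose_mul_self B).eigenvalues_nonneg i)]
  set Sinv : Matrix (Fin d) (Fin d) ℂ := diagonal (fun i => (((σ i)⁻¹ : ℝ) : ℂ))
  have hSinv : Sinvᴴ = Sinv := by
    rw [diagonal_conjTranspose]; congr 1; funext i; simp
  -- The partial isometry of the polar decomposition `B = W √(Bᴴ B)`; as `0⁻¹ = 0`, it
  -- vanishes on the kernel of `Bᴴ B`.
  set W : Matrix (Fin d) (Fin d) ℂ := B * U * Sinv * star (U : Matrix (Fin d) (Fin d) ℂ)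
  refine ⟨W, ?_, ?_⟩
  · have hWW : star W * W = U * (Sinv * (star (U : Matrix (Fin d) (Fin d) ℂ) * (Bᴴ * B) * U) *
        Sinv) * star (U : Matrix (Fin d) (Fin d) ℂ) := by
      simp only [W, star_eq_conjTranspose, conjTranspose_mul, hSinv, conjTranspose_conjTranspose,
        Matrix.mul_assoc]
    rw [hspec, hdiag, hdiag, ← Unitary.coe_star, Matrix.mul_assoc] at hWW
    have hnorm := congrArg norm hWW
    rw [CStarRing.norm_coe_unitary_mul, CStarRing.norm_mul_coe_unitary, l2_opNorm_diagonal,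
      CStarRing.norm_star_mul_self] at hnorm
    have hE : ‖fun i => (((σ i)⁻¹ * (σ i * σ i) * (σ i)⁻¹ : ℝ) : ℂ)‖ ≤ 1 := by
      refine pi_norm_le_iff_of_nonneg zero_le_one |>.mpr fun i => ?_
      rcases eq_or_ne (σ i) 0 with h | h <;> simp [h]
    nlinarith [norm_nonneg W]
  · have hWB : Wᴴ * B = U * (Sinv * (star (U : Matrix (Fin d) (Fin d) ℂ) * (Bᴴ * B))) := by
      simp only [W, conjTranspose_mul, hSinv, star_eq_conjTranspose, conjTranspose_conjTranspose,
        Matrix.mul_assoc]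
    rw [hWB, trace_mul_comm, Matrix.mul_assoc, hspec,
      hdiag, traceNorm, Matrix.PosSemidef.sqrt, trace_mul_cycle, Unitary.coe_star_mul_self,
      Matrix.one_mul]
    simp [← mul_assoc, inv_mul_mul_self, σ]

open scoped Matrix.Norms.L2Operator in
lemma traceNorm_mul_le {d : ℕ} (X Y : Matrix (Fin d) (Fin d) ℂ) :
    traceNorm (X * Y) ≤ frobeniusNorm X * frobeniusNorm Y := by
  obtain ⟨W, hW, htr⟩ := exists_norm_le_one_traceNorm_eq_re_trace (X * Y)
  calc traceNorm (X * Y) = ((Xᴴ * W)ᴴ * Y).trace.re := by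
        rw [htr, conjTranspose_mul, conjTranspose_conjTranspose, Matrix.mul_assoc]
    _ ≤ frobeniusNorm (Xᴴ * W) * frobeniusNorm Y := re_trace_conjTranspose_mul_le _ _
    _ ≤ frobeniusNorm Xᴴ * ‖W‖ * frobeniusNorm Y :=
        mul_le_mul_of_nonneg_right (frobeniusNorm_mul_le Xᴴ W) (frobeniusNorm_nonneg _)
    _ ≤ frobeniusNorm X * frobeniusNorm Y := by
        rw [frobeniusNorm_conjTranspose]
        exact mul_le_mul_of_nonneg_right (mul_le_of_le_one_right (frobeniusNorm_nonneg X) hW)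
          (frobeniusNorm_nonneg Y)

theorem traceNorm_offdiag_block_le_general {d : ℕ}
    (ρ P : Matrix (Fin d) (Fin d) ℂ)
    (hρ : ρ.PosSemidef) (hρtr : ρ.trace = 1)
    (hP1 : Pᴴ = P) (hP2 : P * P = P)
    (A B D : Matrix (Fin d) (Fin d) ℂ)
    (hA : A = P * ρ * P) (hB : B = P * ρ * (1 - P)) (hD : D = (1 - P) * ρ * (1 - P))
    (hAps : A.PosSemidef) (hDps : D.PosSemidef)
    (Ag Dg : Matrix (Fin d) (Fin d) ℂ)
    -- `Ag` is the Moore–Penrose generalized inverse of `√A`: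
    (hAg1 : hAps.sqrt * Ag * hAps.sqrt = hAps.sqrt)
    (hAg3 : (hAps.sqrt * Ag)ᴴ = hAps.sqrt * Ag)
    -- `Dg` is the Moore–Penrose generalized inverse of `√D`:
    (hDg1 : hDps.sqrt * Dg * hDps.sqrt = hDps.sqrt)
    (hDg4 : (Dg * hDps.sqrt)ᴴ = Dg * hDps.sqrt) :
    traceNorm B ≤ opNorm (Ag * B * Dg) * Real.sqrt D.trace.re := by
  set X := P * hρ.sqrt
  set Z := (1 - P) * hρ.sqrt
  have hQ : (1 - P)ᴴ = 1 - P := by rw [conjTranspose_sub, conjTranspose_one, hP1]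
  have hAX : hAps.sqrt * hAps.sqrt = X * Xᴴ := by
    rw [hAps.sqrt_mul_self, hA, ← hρ.mul_mul_conjTranspose_eq_sqrt, hP1]
  have hDZ : hDps.sqrt * hDps.sqrt = Z * Zᴴ := by
    rw [hDps.sqrt_mul_self, hD, ← hρ.mul_mul_conjTranspose_eq_sqrt, hQ]
  have hXZ : B = X * Zᴴ := by rw [hB, ← hρ.mul_mul_conjTranspose_eq_sqrt, hQ]
  have hfactor : B = hAps.sqrt * (Ag * B * Dg) * hDps.sqrt := by
    conv_lhs => rw [hXZ, ← sqrt_mul_pinv_mul_eq_self hAX hAg1 hAg3,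
      ← conjTranspose_mul_pinv_mul_sqrt_eq_self hDZ hDg1 hDg4]
    simp only [hXZ, Matrix.mul_assoc]
  have htrA : A.trace.re ≤ 1 := by
    have hsum := congrArg Complex.re (trace_mul_mul_add_trace_one_sub_mul_mul hP2 ρ)
    rw [← hA, ← hD, hρtr, Complex.add_re, Complex.one_re] at hsum
    linarith [(Complex.nonneg_iff.mp hDps.trace_nonneg).1]
  calc traceNorm B
      ≤ frobeniusNorm (hAps.sqrt * (Ag * B * Dg)) * frobeniusNorm hDps.sqrt := by
        rw [congrArg traceNorm hfactor]; exact traceNorm_mul_le _ _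
    _ ≤ frobeniusNorm hAps.sqrt * opNorm (Ag * B * Dg) * frobeniusNorm hDps.sqrt := by
        rw [opNorm_eq_norm]
        exact mul_le_mul_of_nonneg_right (frobeniusNorm_mul_le _ _) (frobeniusNorm_nonneg _)
    _ ≤ opNorm (Ag * B * Dg) * Real.sqrt D.trace.re := by
        rw [hAps.frobeniusNorm_sqrt, hDps.frobeniusNorm_sqrt]
        gcongr
        exact mul_le_of_le_one_left (norm_nonneg _) (Real.sqrt_le_one.mpr htrA)

/-- For a density matrix `ρ` with block decomposition
`ρ = [[A, B],[B†, D]]` w.r.t. a projection `P`, with `W = Tr D` and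
`λ = ‖(√A)^g B (√D)^g‖_∞` (where `(·)^g` is the Moore–Penrose generalized inverse,
characterized here by the four Penrose conditions), one has `‖B‖₁ ≤ λ √W`. -/
theorem traceNorm_offdiag_block_le {d : ℕ}
    (ρ P : Matrix (Fin d) (Fin d) ℂ)
    (hρ : ρ.PosSemidef) (hρtr : ρ.trace = 1)
    (hP1 : Pᴴ = P) (hP2 : P * P = P)
    (A B D : Matrix (Fin d) (Fin d) ℂ)
    (hA : A = P * ρ * P) (hB : B = P * ρ * (1 - P)) (hD : D = (1 - P) * ρ * (1 - P))
    (hAps : A.PosSemidef) (hDps : D.PosSemidef)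
    (Ag Dg : Matrix (Fin d) (Fin d) ℂ)
    -- `Ag` is the Moore–Penrose generalized inverse of `√A`:
    (hAg1 : hAps.sqrt * Ag * hAps.sqrt = hAps.sqrt)
    (hAg2 : Ag * hAps.sqrt * Ag = Ag)
    (hAg3 : (hAps.sqrt * Ag)ᴴ = hAps.sqrt * Ag)
    (hAg4 : (Ag * hAps.sqrt)ᴴ = Ag * hAps.sqrt)
    -- `Dg` is the Moore–Penrose generalized inverse of `√D`:
    (hDg1 : hDps.sqrt * Dg * hDps.sqrt = hDps.sqrt)
    (hDg2 : Dg * hDps.sqrt * Dg = Dg)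
    (hDg3 : (hDps.sqrt * Dg)ᴴ = hDps.sqrt * Dg)
    (hDg4 : (Dg * hDps.sqrt)ᴴ = Dg * hDps.sqrt) :
    traceNorm B ≤ opNorm (Ag * B * Dg) * Real.sqrt D.trace.re :=
  traceNorm_offdiag_block_le_general ρ P hρ hρtr hP1 hP2 A B D hA hB hD hAps hDps Ag Dg hAg1 hAg3
    hDg1 hDg4
end

section
/- Cross-click probability formula: for t ∈ [0,1] and nonnegative integers m ≤ n, ∑_{(a,b): 0≤a≤n−m, 0≤b≤m, a+b≠0, a+b≠n} C(m,b) C(n−m,a) t^{a+b} (1−t)^{n−a−b} (1/2)^{a+b} (2^{a+b} − (3/2)^{a+b}) = 1 − t^n − (1 − t/4)^n + (3t/4)^n. In particular the value is independent of m. -/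
/-!
Write `k = a + b`. Since `(1/2)^k (2^k - (3/2)^k) = 1 - (3/4)^k`, the sum over the whole rectangle
`[0, n-m] × [0, m]` is the difference of the two Vandermonde-type binomial expansions
`(t + (1-t))^n - (3t/4 + (1-t))^n`. Of the two excluded corners, `(0,0)` contributes `0` and
`(n-m, m)` contributes `t^n - (3t/4)^n`.
-/

open Finset

theorem sum_choose_mul_choose_mul_pow_mul_pow {R : Type*} [CommSemiring R] (x y : R) (q m : ℕ) :
    ∑ p ∈ range (q + 1) ×ˢ range (m + 1),
      (m.choose p.2 : R) * (q.choose p.1 : R) * x ^ (p.1 + p.2) * y ^ (q + m - p.1 - p.2) =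
    (x + y) ^ (q + m) := by
  have factor : ∀ a ∈ range (q + 1), ∀ b ∈ range (m + 1),
      (m.choose b : R) * (q.choose a : R) * x ^ (a + b) * y ^ (q + m - a - b) =
        (x ^ a * y ^ (q - a) * q.choose a) * (x ^ b * y ^ (m - b) * m.choose b) := by
    intro a ha b hb
    rw [mem_range] at ha hb
    rw [show q + m - a - b = (q - a) + (m - b) by omega, pow_add, pow_add]
    ring
  rw [sum_product, sum_congr rfl fun a ha => sum_congr rfl (factor a ha), ← sum_mul_sum,
    ← add_pow, ← add_pow, pow_add]

theorem sum_filter_add_ne_zero_and_ne_eq_sub {M : Type*} [AddCommGroup M] (q m : ℕ)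
    (f : ℕ × ℕ → M) (hf : f (0, 0) = 0) :
    ∑ x ∈ (range (q + 1) ×ˢ range (m + 1)).filter
        (fun x => x.1 + x.2 ≠ 0 ∧ x.1 + x.2 ≠ q + m), f x =
      ∑ x ∈ range (q + 1) ×ˢ range (m + 1), f x - f (q, m) := by
  have hcorners : (range (q + 1) ×ˢ range (m + 1)).filter
      (fun x => ¬(x.1 + x.2 ≠ 0 ∧ x.1 + x.2 ≠ q + m)) = {(0, 0), (q, m)} := by
    ext ⟨a, b⟩
    simp only [mem_filter, mem_product, mem_range, mem_insert, mem_singleton, Prod.mk.injEq]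
    omega
  rw [eq_sub_iff_add_eq, ← sum_filter_add_sum_filter_not (range (q + 1) ×ˢ range (m + 1))
    (fun x => x.1 + x.2 ≠ 0 ∧ x.1 + x.2 ≠ q + m), hcorners,
    sum_insert_of_eq_zero_if_notMem (fun _ => hf), sum_singleton]

theorem pow_mul_half_pow_mul_sub (t : ℝ) (k : ℕ) :
    t ^ k * (1 / 2 : ℝ) ^ k * ((2 : ℝ) ^ k - (3 / 2 : ℝ) ^ k) = t ^ k - (3 * t / 4) ^ k := by
  rw [mul_assoc, mul_sub, ← mul_pow, ← mul_pow, mul_sub, ← mul_pow, ← mul_pow]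
  norm_num
  ring

theorem cross_click_probability_general (t : ℝ)
    (n m : ℕ) (hmn : m ≤ n) :
    ∑ x ∈ (Finset.range (n - m + 1) ×ˢ Finset.range (m + 1)).filter
        (fun x => x.1 + x.2 ≠ 0 ∧ x.1 + x.2 ≠ n),
      (m.choose x.2 : ℝ) * ((n - m).choose x.1 : ℝ) * t ^ (x.1 + x.2) *
        (1 - t) ^ (n - x.1 - x.2) * (1 / 2 : ℝ) ^ (x.1 + x.2) *
        ((2 : ℝ) ^ (x.1 + x.2) - (3 / 2 : ℝ) ^ (x.1 + x.2)) =
    1 - t ^ n - (1 - t / 4) ^ n + (3 * t / 4) ^ n := by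
  obtain ⟨q, rfl⟩ := Nat.exists_eq_add_of_le' hmn
  rw [Nat.add_sub_cancel]
  let B : ℝ → ℕ × ℕ → ℝ := fun x p =>
    (m.choose p.2 : ℝ) * (q.choose p.1 : ℝ) * x ^ (p.1 + p.2) * (1 - t) ^ (q + m - p.1 - p.2)
  have hsummand : ∀ p : ℕ × ℕ,
      (m.choose p.2 : ℝ) * (q.choose p.1 : ℝ) * t ^ (p.1 + p.2) *
        (1 - t) ^ (q + m - p.1 - p.2) * (1 / 2 : ℝ) ^ (p.1 + p.2) *
        ((2 : ℝ) ^ (p.1 + p.2) - (3 / 2 : ℝ) ^ (p.1 + p.2)) = B t p - B (3 * t / 4) p := by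
    intro p
    linear_combination (m.choose p.2 : ℝ) * (q.choose p.1 : ℝ) * (1 - t) ^ (q + m - p.1 - p.2) *
      pow_mul_half_pow_mul_sub t (p.1 + p.2)
  rw [sum_congr rfl fun p _ => hsummand p, sum_filter_add_ne_zero_and_ne_eq_sub q m _ (by simp [B]),
    sum_sub_distrib, sum_choose_mul_choose_mul_pow_mul_pow, sum_choose_mul_choose_mul_pow_mul_pow]
  simp only [B, Nat.choose_self, Nat.cast_one, Nat.sub_self, Nat.add_sub_cancel_left, pow_zero,
    mul_one, one_mul]
  ring

/-- Cross-click probability formula: for `t ∈ [0,1]` and `m ≤ n`,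
`∑_{(a,b): a+b≠0, a+b≠n} C(m,b) C(n−m,a) t^{a+b} (1−t)^{n−a−b} (1/2)^{a+b}
(2^{a+b} − (3/2)^{a+b}) = 1 − t^n − (1 − t/4)^n + (3t/4)^n`;
in particular the value is independent of `m`. -/
theorem cross_click_probability (t : ℝ) (ht0 : 0 ≤ t) (ht1 : t ≤ 1)
    (n m : ℕ) (hmn : m ≤ n) :
    ∑ x ∈ (Finset.range (n - m + 1) ×ˢ Finset.range (m + 1)).filter
        (fun x => x.1 + x.2 ≠ 0 ∧ x.1 + x.2 ≠ n),
      (m.choose x.2 : ℝ) * ((n - m).choose x.1 : ℝ) * t ^ (x.1 + x.2) *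
        (1 - t) ^ (n - x.1 - x.2) * (1 / 2 : ℝ) ^ (x.1 + x.2) *
        ((2 : ℝ) ^ (x.1 + x.2) - (3 / 2 : ℝ) ^ (x.1 + x.2)) =
    1 - t ^ n - (1 - t / 4) ^ n + (3 * t / 4) ^ n :=
  cross_click_probability_general t n m hmn
end

section
/- Monotonicity of cross-click probability: define f(n) = 1 − t^n − (1 − t/4)^n + (3t/4)^n for t ∈ [0,1]. Then f(n+1) − f(n) ≥ (t^n − (3t/4)^n)(1−t) ≥ 0 for every nonnegative integer n, so f is monotonically nondecreasing in n. -/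
/-! Expanding one step gives the exact identity
`f(n+1) - f(n) = (tⁿ - (3t/4)ⁿ)(1 - t) + (t/4)((1 - t/4)ⁿ - (3t/4)ⁿ)`,
and both summands are nonnegative on `[0,1]` because `3t/4 ≤ t` and `3t/4 ≤ 1 - t/4` there. -/

noncomputable def crossClickProb (t : ℝ) (n : ℕ) : ℝ :=
  1 - t ^ n - (1 - t / 4) ^ n + (3 * t / 4) ^ n

namespace CrossClick

theorem prob_succ_sub (t : ℝ) (n : ℕ) :
    crossClickProb t (n + 1) - crossClickProb t n =
      (t ^ n - (3 * t / 4) ^ n) * (1 - t) + t / 4 * ((1 - t / 4) ^ n - (3 * t / 4) ^ n) := by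
  unfold crossClickProb
  ring

variable {t : ℝ}

theorem pow_sub_pow_three_quarters_nonneg (ht0 : 0 ≤ t) (n : ℕ) :
    0 ≤ t ^ n - (3 * t / 4) ^ n :=
  sub_nonneg.2 <| pow_le_pow_left₀ (by positivity) (by linarith) n

theorem pow_one_sub_quarter_sub_pow_nonneg (ht0 : 0 ≤ t) (ht1 : t ≤ 1) (n : ℕ) :
    0 ≤ (1 - t / 4) ^ n - (3 * t / 4) ^ n :=
  sub_nonneg.2 <| pow_le_pow_left₀ (by positivity) (by linarith) n

theorem lower_bound_nonneg (ht0 : 0 ≤ t) (ht1 : t ≤ 1) (n : ℕ) :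
    0 ≤ (t ^ n - (3 * t / 4) ^ n) * (1 - t) :=
  mul_nonneg (pow_sub_pow_three_quarters_nonneg ht0 n) (by linarith)

theorem lower_bound_le_prob_succ_sub (ht0 : 0 ≤ t) (ht1 : t ≤ 1) (n : ℕ) :
    (t ^ n - (3 * t / 4) ^ n) * (1 - t) ≤ crossClickProb t (n + 1) - crossClickProb t n := by
  rw [prob_succ_sub]
  have := mul_nonneg (by positivity : 0 ≤ t / 4) (pow_one_sub_quarter_sub_pow_nonneg ht0 ht1 n)
  linarith

theorem prob_monotone (ht0 : 0 ≤ t) (ht1 : t ≤ 1) : Monotone (crossClickProb t) :=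
  monotone_nat_of_le_succ fun n => by
    linarith [lower_bound_le_prob_succ_sub ht0 ht1 n, lower_bound_nonneg ht0 ht1 n]

end CrossClick

/-- Monotonicity of cross-click probability: for
`f(n) = 1 − t^n − (1 − t/4)^n + (3t/4)^n` with `t ∈ [0,1]`, one has
`f(n+1) − f(n) ≥ (t^n − (3t/4)^n)(1−t) ≥ 0` for every `n`, so `f` is monotone. -/
theorem cross_click_monotone (t : ℝ) (ht0 : 0 ≤ t) (ht1 : t ≤ 1)
    (f : ℕ → ℝ)
    (hf : ∀ n, f n = 1 - t ^ n - (1 - t / 4) ^ n + (3 * t / 4) ^ n) :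
    (∀ n : ℕ, (t ^ n - (3 * t / 4) ^ n) * (1 - t) ≤ f (n + 1) - f n ∧
      0 ≤ (t ^ n - (3 * t / 4) ^ n) * (1 - t)) ∧
    Monotone f := by
  obtain rfl : f = crossClickProb t := funext hf
  exact ⟨fun n => ⟨CrossClick.lower_bound_le_prob_succ_sub ht0 ht1 n,
    CrossClick.lower_bound_nonneg ht0 ht1 n⟩, CrossClick.prob_monotone ht0 ht1⟩
end
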